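/- arXiv:math/0310138 — 4 statements merged into one kernel-verified Lean document; each statement's English description precedes it below -/
import Mathlib

section
/- Let X be a locally compact Hausdorff abelian topological (additive) group which is second countable, and let μ be a nonzero finite Borel measure on X which is inner regular. For g ∈ C₀(X, ℂ) define (T_μ g)(x) = ∫ X, g (x - t) dμ(t). Then T_μ g ∈ C₀(X, ℂ) for every g ∈ C₀(X, ℂ), the map T_μ : C₀(X, ℂ) → C₀(X, ℂ) is linear and bounded, and its operator norm equals the total mass: ‖T_μ‖ = (μ(univ)).toReal. (This computes the multiplier norm ‖T_φ‖ for φ ∈ B(G), G locally compact abelian, and shows it agrees with the measure norm ‖μ‖ = ‖φ‖.) -/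
/-!
Both the continuity of `x ↦ ∫ g (x - t) ∂μ` and its vanishing at infinity follow from dominated
convergence with the constant bound `‖g‖`, the latter along the cocompact filter, which is
countably generated because `X` is σ-compact. The same bound gives `‖T_μ‖ ≤ μ(X)`. Conversely,
for compact `K` a Urysohn function `0 ≤ φ ≤ 1` equal to `1` on `-K` has `(T_μ φ)(0) ≥ μ(K)`,
and `μ(X)` is the supremum of `μ` over a compact exhaustion of `X`.
-/

open MeasureTheory Filter Set
open scoped ZeroAtInfty

theorem Filter.isCountablyGenerated_cocompact (X : Type*) [TopologicalSpace X]
    [WeaklyLocallyCompactSpace X] [SigmaCompactSpace X] : (cocompact X).IsCountablyGenerated :=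
  let K := CompactExhaustion.choice X
  have hK : (cocompact X).HasBasis (fun _ : ℕ => True) fun n => (K n)ᶜ :=
    hasBasis_cocompact.to_hasBasis
      (fun _ hL => (K.exists_superset_of_isCompact hL).imp fun _ hn =>
        ⟨trivial, compl_subset_compl.2 hn⟩)
      (fun n _ => ⟨K n, K.isCompact n, subset_rfl⟩)
  hK.isCountablyGenerated

namespace ZeroAtInftyContinuousMap

theorem norm_apply_le {α β : Type*} [TopologicalSpace α] [SeminormedAddCommGroup β]
    (g : C₀(α, β)) (x : α) : ‖g x‖ ≤ ‖g‖ := by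
  simpa [norm_toBCF_eq_norm] using g.toBCF.norm_coe_le_norm x

theorem norm_le {α β : Type*} [TopologicalSpace α] [SeminormedAddCommGroup β]
    (g : C₀(α, β)) {C : ℝ} (hC : 0 ≤ C) : ‖g‖ ≤ C ↔ ∀ x, ‖g x‖ ≤ C := by
  rw [← norm_toBCF_eq_norm]
  exact BoundedContinuousFunction.norm_le hC

variable {X E : Type*} (𝕜 : Type*) [AddGroup X] [TopologicalSpace X] [IsTopologicalAddGroup X]
  [MeasurableSpace X] [OpensMeasurableSpace X] [SecondCountableTopology X]
  [NormedAddCommGroup E] [NontriviallyNormedField 𝕜] [NormedSpace 𝕜 E]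
  (μ : Measure X) [IsFiniteMeasure μ]

theorem integrable_comp_sub (g : C₀(X, E)) (x : X) : Integrable (fun t => g (x - t)) μ :=
  (integrable_const ‖g‖).mono'
    (g.continuous.comp (continuous_const.sub continuous_id)).aestronglyMeasurable
    (ae_of_all _ fun t => g.norm_apply_le (x - t))

variable [NormedSpace ℝ E] [LocallyCompactSpace X]

noncomputable def convolution (g : C₀(X, E)) : C₀(X, E) where
  toFun x := ∫ t, g (x - t) ∂μ
  continuous_toFun :=
    continuous_of_dominated (fun x => (integrable_comp_sub μ g x).aestronglyMeasurable)
      (fun x => ae_of_all _ fun t => g.norm_apply_le (x - t)) (integrable_const ‖g‖)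
      (ae_of_all _ fun t => g.continuous.comp (continuous_id.sub continuous_const))
  zero_at_infty' := by
    have := isCountablyGenerated_cocompact X
    simpa using tendsto_integral_filter_of_dominated_convergence (fun _ => ‖g‖)
      (Eventually.of_forall fun x => (integrable_comp_sub μ g x).aestronglyMeasurable)
      (Eventually.of_forall fun x => ae_of_all _ fun t => g.norm_apply_le (x - t))
      (integrable_const ‖g‖)
      (ae_of_all _ fun t => (zero_at_infty g).comp (Homeomorph.subRight t).map_cocompact.le)

variable [SMulCommClass ℝ 𝕜 E]

noncomputable def convolutionCLM : C₀(X, E) →L[𝕜] C₀(X, E) :=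
  LinearMap.mkContinuous
    { toFun := convolution μ
      map_add' := fun g h => ext fun x =>
        integral_add (integrable_comp_sub μ g x) (integrable_comp_sub μ h x)
      map_smul' := fun c g => ext fun x => integral_smul c fun t => g (x - t) }
    (μ.real univ) fun g => by
      rw [mul_comm]
      exact (norm_le _ (by positivity)).2 fun x =>
        norm_integral_le_of_norm_le_const (ae_of_all _ fun t => g.norm_apply_le (x - t))

theorem convolutionCLM_apply (g : C₀(X, E)) (x : X) :
    convolutionCLM 𝕜 μ g x = ∫ t, g (x - t) ∂μ := rfl

theorem norm_convolutionCLM_le : ‖convolutionCLM (E := E) 𝕜 μ‖ ≤ μ.real univ :=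
  LinearMap.mkContinuous_norm_le _ measureReal_nonneg _

theorem measure_le_ofReal_norm_convolutionCLM {K : Set X} (hK : IsCompact K) :
    μ K ≤ ENNReal.ofReal ‖convolutionCLM (E := ℂ) ℂ μ‖ := by
  obtain ⟨f, hf1, -, hfc, hf01⟩ :=
    exists_continuous_one_zero_of_isCompact hK.neg isClosed_empty (disjoint_empty _)
  let g : C₀(X, ℂ) :=
    ⟨(⟨((↑) : ℝ → ℂ), Complex.continuous_ofReal⟩ : C(ℝ, ℂ)).comp f,
      (hfc.comp_left Complex.ofReal_zero).is_zero_at_infty⟩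
  have hg_apply (y : X) : g y = f y := rfl
  have hg : ‖g‖ ≤ 1 := by
    refine (norm_le g zero_le_one).2 fun y => ?_
    rw [hg_apply, Complex.norm_real, Real.norm_of_nonneg (hf01 y).1]
    exact (hf01 y).2
  have hTg : convolutionCLM ℂ μ g 0 = ((∫ t, f (-t) ∂μ : ℝ) : ℂ) := by
    simp only [convolutionCLM_apply, hg_apply, zero_sub]
    exact integral_ofReal
  have hf_int : Integrable (fun t => f (-t)) μ :=
    (f.continuous.comp continuous_neg).integrable_of_hasCompactSupport
      (hfc.comp_homeomorph (Homeomorph.neg X))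
  calc μ K ≤ ENNReal.ofReal (∫ t, f (-t) ∂μ) :=
        hf_int.measure_le_integral (ae_of_all _ fun t => (hf01 _).1)
          fun t ht => (hf1 (neg_mem_neg.2 ht)).ge
    _ ≤ ENNReal.ofReal ‖convolutionCLM (E := ℂ) ℂ μ‖ := by
      gcongr
      calc ∫ t, f (-t) ∂μ ≤ ‖convolutionCLM ℂ μ g 0‖ := by
            rw [hTg, Complex.norm_real]
            exact le_abs_self _
        _ ≤ ‖convolutionCLM ℂ μ g‖ := norm_apply_le _ 0
        _ ≤ ‖convolutionCLM ℂ μ‖ := (convolutionCLM ℂ μ).unit_le_opNorm g hg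

theorem norm_convolutionCLM : ‖convolutionCLM (E := ℂ) ℂ μ‖ = μ.real univ := by
  refine le_antisymm (norm_convolutionCLM_le ℂ μ)
    (ENNReal.toReal_le_of_le_ofReal (ContinuousLinearMap.opNorm_nonneg _) ?_)
  let K := CompactExhaustion.choice X
  rw [← K.iUnion_eq, Monotone.measure_iUnion fun _ _ h => K.subset h]
  exact iSup_le fun n => measure_le_ofReal_norm_convolutionCLM μ (K.isCompact n)

end ZeroAtInftyContinuousMap

theorem multiplier_norm_eq_total_mass_general
    {X : Type*} [AddCommGroup X] [TopologicalSpace X] [IsTopologicalAddGroup X]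
    [LocallyCompactSpace X] [SecondCountableTopology X]
    [MeasurableSpace X] [BorelSpace X]
    (μ : Measure X) [IsFiniteMeasure μ] :
    ∃ T : C₀(X, ℂ) →L[ℂ] C₀(X, ℂ),
      (∀ (g : C₀(X, ℂ)) (x : X), T g x = ∫ t : X, g (x - t) ∂μ) ∧
      ‖T‖ = (μ Set.univ).toReal :=
  ⟨ZeroAtInftyContinuousMap.convolutionCLM ℂ μ, ZeroAtInftyContinuousMap.convolutionCLM_apply ℂ μ,
    ZeroAtInftyContinuousMap.norm_convolutionCLM μ⟩

/-- For a nonzero finite inner regular Borel measure `μ` on a second countable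
locally compact Hausdorff abelian group `X`, convolution against `μ` defines a
bounded linear operator `T_μ` on `C₀(X, ℂ)`, `(T_μ g)(x) = ∫ g (x - t) dμ(t)`,
whose operator norm equals the total mass of `μ`. -/
theorem multiplier_norm_eq_total_mass
    {X : Type*} [AddCommGroup X] [TopologicalSpace X] [IsTopologicalAddGroup X]
    [LocallyCompactSpace X] [T2Space X] [SecondCountableTopology X]
    [MeasurableSpace X] [BorelSpace X]
    (μ : Measure X) [IsFiniteMeasure μ] (hμ : μ ≠ 0) (hreg : μ.InnerRegular) :
    ∃ T : C₀(X, ℂ) →L[ℂ] C₀(X, ℂ),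
      (∀ (g : C₀(X, ℂ)) (x : X), T g x = ∫ t : X, g (x - t) ∂μ) ∧
      ‖T‖ = (μ Set.univ).toReal :=
  multiplier_norm_eq_total_mass_general μ
end

section
/- Let G be a second countable locally compact Hausdorff topological group with left Haar measure λ, and let f, g : G → ℂ be square-integrable with respect to λ (f, g ∈ L²(G)). Then for every x ∈ G the function t ↦ f (x⁻¹ * t) * conj (g t) is integrable, the coefficient function φ(x) = ∫ G, f (x⁻¹ * t) * conj (g t) dλ(t) is continuous on G, tends to 0 at infinity (i.e., tends to 0 along the cocompact filter on G), and satisfies ‖φ(x)‖ ≤ ‖f‖₂ * ‖g‖₂ for all x ∈ G. (This shows coefficients of the left regular representation lie in C₀(G) and that the sup norm is dominated by the A(G)-norm ‖f‖₂‖g‖₂.) -/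
open MeasureTheory Filter Topology DomMulAct
open scoped ENNReal InnerProductSpace

/-!
Write the coefficient as `x ↦ ⟪v, λ(x) u⟫` on `L²(G)`, where `λ(x) u = u (x⁻¹ * ·)`.
Cauchy–Schwarz and left invariance of the Haar measure give the bound, and continuity of the
translation action on `L²` gives continuity. The coefficient depends continuously on `(u, v)`,
uniformly in `x`, and it vanishes outside the compact set `supp v * (supp u)⁻¹` when `u` and `v`
have compact support; as such functions are dense in `L²`, every coefficient vanishes at infinity.
-/

theorem MeasureTheory.MemLp.norm_toLp_two {α E : Type*} [MeasurableSpace α] {μ : Measure α}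
    [NormedAddCommGroup E] {f : α → E} (hf : MemLp f 2 μ) :
    ‖hf.toLp f‖ = (∫ t, ‖f t‖ ^ 2 ∂μ) ^ ((1 : ℝ) / 2) := by
  rw [Lp.norm_toLp, hf.eLpNorm_eq_integral_rpow_norm two_ne_zero ENNReal.ofNat_ne_top,
    ENNReal.toReal_ofReal (by positivity)]
  norm_num

theorem MeasureTheory.Lp.dense_setOf_ae_eq_hasCompactSupport {α E : Type*} [MeasurableSpace α]
    [TopologicalSpace α] [NormalSpace α] [R1Space α] [WeaklyLocallyCompactSpace α] [BorelSpace α]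
    {μ : Measure α} [μ.Regular] [NormedAddCommGroup E] [NormedSpace ℝ E] {p : ℝ≥0∞}
    [Fact (1 ≤ p)] (hp : p ≠ ∞) :
    Dense {u : Lp E p μ | ∃ f : α → E, HasCompactSupport f ∧ u =ᵐ[μ] f} := by
  refine Metric.dense_iff.2 fun u r hr => ?_
  obtain ⟨f, hf_supp, hf_close, -, hf⟩ :=
    (Lp.memLp u).exists_hasCompactSupport_eLpNorm_sub_le hp (ENNReal.ofReal_pos.2 (half_pos hr)).ne'
  refine ⟨hf.toLp f, ?_, f, hf_supp, hf.coeFn_toLp⟩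
  have hdist : dist u (hf.toLp f) ≤ r / 2 := by
    rw [Lp.dist_def, eLpNorm_congr_ae (EventuallyEq.rfl.sub hf.coeFn_toLp)]
    exact ENNReal.toReal_le_of_le_ofReal (half_pos hr).le hf_close
  rw [Metric.mem_ball, dist_comm]
  linarith

section LeftRegularCoeff

variable {G : Type*} [Group G] [MeasurableSpace G] [MeasurableMul G] {μ : Measure G}
  [μ.IsMulLeftInvariant]

/-- The coefficient `x ↦ ⟪v, λ(x) u⟫` of the left regular representation: `mk x⁻¹ • u` is the
translate `t ↦ u (x⁻¹ * t)`. -/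
noncomputable def leftRegularCoeff (u v : G →₂[μ] ℂ) (x : G) : ℂ := ⟪v, mk x⁻¹ • u⟫_ℂ

theorem leftRegularCoeff_eq_integral {u v : G →₂[μ] ℂ} {f g : G → ℂ} (hu : u =ᵐ[μ] f)
    (hv : v =ᵐ[μ] g) (x : G) :
    leftRegularCoeff u v x = ∫ t, f (x⁻¹ * t) * (starRingEnd ℂ) (g t) ∂μ := by
  rw [leftRegularCoeff, L2.inner_def]
  refine integral_congr_ae ?_
  have hu' : (fun t => u (x⁻¹ * t)) =ᵐ[μ] fun t => f (x⁻¹ * t) :=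
    (measurePreserving_mul_left μ x⁻¹).quasiMeasurePreserving.ae_eq_comp hu
  filter_upwards [smul_Lp_ae_eq (mk x⁻¹) u, hu', hv] with t h₁ h₂ h₃
  rw [RCLike.inner_apply, h₁, h₃, ← h₂]
  rfl

theorem norm_leftRegularCoeff_le (u v : G →₂[μ] ℂ) (x : G) :
    ‖leftRegularCoeff u v x‖ ≤ ‖u‖ * ‖v‖ :=
  (norm_inner_le_norm _ _).trans_eq (by rw [norm_smul_Lp, mul_comm])

theorem norm_leftRegularCoeff_sub_le (u v u' v' : G →₂[μ] ℂ) (x : G) :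
    ‖leftRegularCoeff u v x - leftRegularCoeff u' v' x‖ ≤ ‖u - u'‖ * ‖v‖ + ‖u'‖ * ‖v - v'‖ := by
  have hsplit : leftRegularCoeff u v x - leftRegularCoeff u' v' x =
      leftRegularCoeff (u - u') v x + leftRegularCoeff u' (v - v') x := by
    simp only [leftRegularCoeff, smul_Lp_sub, inner_sub_left, inner_sub_right]
    ring
  rw [hsplit]
  exact (norm_add_le _ _).trans
    (add_le_add (norm_leftRegularCoeff_le _ _ x) (norm_leftRegularCoeff_le _ _ x))

theorem tendstoUniformly_leftRegularCoeff (u v : G →₂[μ] ℂ) :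
    TendstoUniformly (fun w : (G →₂[μ] ℂ) × (G →₂[μ] ℂ) => leftRegularCoeff w.1 w.2)
      (leftRegularCoeff u v) (𝓝 (u, v)) := by
  have hbound : Tendsto (fun w : (G →₂[μ] ℂ) × (G →₂[μ] ℂ) =>
      ‖u - w.1‖ * ‖v‖ + ‖w.1‖ * ‖v - w.2‖) (𝓝 (u, v)) (𝓝 0) := by
    have hcont : Continuous fun w : (G →₂[μ] ℂ) × (G →₂[μ] ℂ) =>
        ‖u - w.1‖ * ‖v‖ + ‖w.1‖ * ‖v - w.2‖ := by fun_prop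
    simpa using hcont.tendsto (u, v)
  refine Metric.tendstoUniformly_iff.2 fun ε hε => ?_
  filter_upwards [hbound.eventually (gt_mem_nhds hε)] with w hw x
  rw [dist_eq_norm]
  exact (norm_leftRegularCoeff_sub_le _ _ _ _ x).trans_lt hw

theorem tendsto_leftRegularCoeff_of_hasCompactSupport [TopologicalSpace G] [IsTopologicalGroup G]
    {u v : G →₂[μ] ℂ} {f g : G → ℂ} (hf : HasCompactSupport f) (hg : HasCompactSupport g)
    (hu : u =ᵐ[μ] f) (hv : v =ᵐ[μ] g) :
    Tendsto (leftRegularCoeff u v) (cocompact G) (𝓝 0) := by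
  refine tendsto_const_nhds.congr' ?_
  filter_upwards [(hg.mul hf.inv).compl_mem_cocompact] with x hx
  rw [leftRegularCoeff_eq_integral hu hv, eq_comm]
  refine integral_eq_zero_of_ae (ae_of_all _ fun t => ?_)
  by_contra hne
  obtain ⟨hfx, hgt⟩ := mul_ne_zero_iff.1 hne
  refine hx ⟨t, subset_tsupport _ (by simpa using hgt), (x⁻¹ * t)⁻¹,
    Set.inv_mem_inv.2 (subset_tsupport _ hfx), by group⟩

variable [TopologicalSpace G] [IsTopologicalGroup G] [BorelSpace G]

theorem continuous_leftRegularCoeff [IsLocallyFiniteMeasure μ] [μ.InnerRegularCompactLTTop]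
    (u v : G →₂[μ] ℂ) :
    Continuous (leftRegularCoeff u v) :=
  have : Fact ((2 : ℝ≥0∞) ≠ ∞) := ⟨ENNReal.ofNat_ne_top⟩
  continuous_const.inner ((continuous_mk.comp continuous_inv).smul continuous_const)

theorem tendsto_leftRegularCoeff_cocompact [NormalSpace G] [WeaklyLocallyCompactSpace G]
    [μ.Regular] (u v : G →₂[μ] ℂ) : Tendsto (leftRegularCoeff u v) (cocompact G) (𝓝 0) := by
  set D := {w : G →₂[μ] ℂ | ∃ f : G → ℂ, HasCompactSupport f ∧ w =ᵐ[μ] f}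
  have hD : Dense D := Lp.dense_setOf_ae_eq_hasCompactSupport ENNReal.ofNat_ne_top
  have : (𝓝[D ×ˢ D] (u, v)).NeBot :=
    mem_closure_iff_nhdsWithin_neBot.1 ((hD.prod hD).closure_eq ▸ trivial)
  have huniform : TendstoUniformlyOnFilter (fun w => leftRegularCoeff w.1 w.2)
      (leftRegularCoeff u v) (𝓝[D ×ˢ D] (u, v)) (cocompact G) :=
    (tendstoUniformly_leftRegularCoeff u v).tendstoUniformlyOnFilter.mono_left nhdsWithin_le_nhds
      |>.mono_right le_top
  refine huniform.tendsto_of_eventually_tendsto ?_ tendsto_const_nhds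
  filter_upwards [self_mem_nhdsWithin] with w ⟨⟨f, hf, hwf⟩, ⟨g, hg, hwg⟩⟩
  exact tendsto_leftRegularCoeff_of_hasCompactSupport hf hg hwf hwg

end LeftRegularCoeff

theorem regular_representation_coefficient_general
    {G : Type*} [Group G] [TopologicalSpace G] [IsTopologicalGroup G]
    [LocallyCompactSpace G] [SecondCountableTopology G]
    [MeasurableSpace G] [BorelSpace G]
    (lam : Measure G) [lam.IsHaarMeasure]
    (f g : G → ℂ) (hf : MemLp f 2 lam) (hg : MemLp g 2 lam) :
    (∀ x : G, Integrable (fun t : G => f (x⁻¹ * t) * (starRingEnd ℂ) (g t)) lam) ∧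
    Continuous (fun x : G => ∫ t : G, f (x⁻¹ * t) * (starRingEnd ℂ) (g t) ∂lam) ∧
    Tendsto (fun x : G => ∫ t : G, f (x⁻¹ * t) * (starRingEnd ℂ) (g t) ∂lam)
      (cocompact G) (nhds 0) ∧
    (∀ x : G, ‖∫ t : G, f (x⁻¹ * t) * (starRingEnd ℂ) (g t) ∂lam‖ ≤
      (∫ t : G, ‖f t‖ ^ 2 ∂lam) ^ ((1 : ℝ) / 2) *
        (∫ t : G, ‖g t‖ ^ 2 ∂lam) ^ ((1 : ℝ) / 2)) := by
  have : NormalSpace G := NormalSpace.of_regularSpace_secondCountableTopology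
  have hcoeff : (fun x : G => ∫ t : G, f (x⁻¹ * t) * (starRingEnd ℂ) (g t) ∂lam) =
      leftRegularCoeff (hf.toLp f) (hg.toLp g) :=
    funext fun x => (leftRegularCoeff_eq_integral hf.coeFn_toLp hg.coeFn_toLp x).symm
  refine ⟨fun x => ?_, ?_, ?_, fun x => ?_⟩
  · exact (hf.comp_measurePreserving (measurePreserving_mul_left lam x⁻¹)).integrable_mul hg.star
  · exact hcoeff ▸ continuous_leftRegularCoeff _ _
  · exact hcoeff ▸ tendsto_leftRegularCoeff_cocompact _ _
  · rw [congrFun hcoeff x, ← hf.norm_toLp_two, ← hg.norm_toLp_two]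
    exact norm_leftRegularCoeff_le _ _ x

/-- Coefficients of the left regular representation of a second countable
locally compact group: for `f, g ∈ L²(G)` the coefficient
`φ(x) = ∫ f (x⁻¹ t) conj (g t) dλ(t)` is everywhere defined, continuous,
vanishes at infinity, and is bounded by `‖f‖₂ ‖g‖₂`. -/
theorem regular_representation_coefficient
    {G : Type*} [Group G] [TopologicalSpace G] [IsTopologicalGroup G]
    [LocallyCompactSpace G] [T2Space G] [SecondCountableTopology G]
    [MeasurableSpace G] [BorelSpace G]
    (lam : Measure G) [lam.IsHaarMeasure]
    (f g : G → ℂ) (hf : MemLp f 2 lam) (hg : MemLp g 2 lam) :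
    (∀ x : G, Integrable (fun t : G => f (x⁻¹ * t) * (starRingEnd ℂ) (g t)) lam) ∧
    Continuous (fun x : G => ∫ t : G, f (x⁻¹ * t) * (starRingEnd ℂ) (g t) ∂lam) ∧
    Tendsto (fun x : G => ∫ t : G, f (x⁻¹ * t) * (starRingEnd ℂ) (g t) ∂lam)
      (cocompact G) (nhds 0) ∧
    (∀ x : G, ‖∫ t : G, f (x⁻¹ * t) * (starRingEnd ℂ) (g t) ∂lam‖ ≤
      (∫ t : G, ‖f t‖ ^ 2 ∂lam) ^ ((1 : ℝ) / 2) *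
        (∫ t : G, ‖g t‖ ^ 2 ∂lam) ^ ((1 : ℝ) / 2)) :=
  regular_representation_coefficient_general lam f g hf hg
end

section
/- Let n : ℕ, let H be a complex Hilbert space, and let x, y : Fin n → H. Define the matrix A : Matrix (Fin n) (Fin n) ℂ by A i j = ⟪y i, x j⟫ (inner product conjugate-linear in the first variable). Then for every matrix B : Matrix (Fin n) (Fin n) ℂ, the Schur (Hadamard, entrywise) product A ⊙ B satisfies ‖A ⊙ B‖ ≤ (⨆ i, ‖y i‖) * (⨆ j, ‖x j‖) * ‖B‖, where ‖·‖ denotes the operator norm of a matrix acting on the Euclidean space ℂⁿ (the L²-operator norm). (This is the factorization bound for Schur multipliers underlying the identification of the two norms on B(Rₙ) for the trivial groupoid Rₙ.) -/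
/-!
Represent `x` and `y` isometrically by vectors `a j`, `c i` of a finite-dimensional Euclidean
space. Then `A i j = ∑ k, conj (c i k) * a j k`, so `A ⊙ B = ∑ k, D(c_k)ᴴ * B * D(a_k)` with
`D(a_k) = diagonal (a · k)`. For arbitrary operators, Cauchy–Schwarz over `k` gives
`‖∑ k, S_k† B T_k‖ ≤ α ‖B‖ β` as soon as `∑ k, ‖S_k v‖² ≤ α² ‖v‖²` and `∑ k, ‖T_k u‖² ≤ β² ‖u‖²`;
for the diagonal families `∑ k, ‖D(a_k) u‖² = ∑ j, ‖x j‖² |u j|²`, so `β = sup_j ‖x j‖` works.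
-/

open scoped InnerProductSpace
open Finset Matrix

section

variable {𝕜 : Type*} [RCLike 𝕜]

theorem exists_euclideanSpace_inner_eq_of_finite {E ι : Type*} [NormedAddCommGroup E]
    [InnerProductSpace 𝕜 E] [Finite ι] (z : ι → E) :
    ∃ (m : ℕ) (w : ι → EuclideanSpace 𝕜 (Fin m)),
      (∀ i j, ⟪w i, w j⟫_𝕜 = ⟪z i, z j⟫_𝕜) ∧ ∀ i, ‖w i‖ = ‖z i‖ := by
  let K := Submodule.span 𝕜 (Set.range z)
  have : FiniteDimensional 𝕜 K := FiniteDimensional.span_of_finite 𝕜 (Set.finite_range z)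
  let e := (stdOrthonormalBasis 𝕜 K).repr
  let zK : ι → K := fun i => ⟨z i, Submodule.subset_span ⟨i, rfl⟩⟩
  exact ⟨_, fun i => e (zK i), fun i j => e.inner_map_map (zK i) (zK j),
    fun i => e.norm_map (zK i)⟩

namespace ContinuousLinearMap

variable {E F G E' : Type*} [NormedAddCommGroup E] [InnerProductSpace 𝕜 E]
  [NormedAddCommGroup F] [InnerProductSpace 𝕜 F] [NormedAddCommGroup G] [InnerProductSpace 𝕜 G]
  [CompleteSpace G] [NormedAddCommGroup E'] [InnerProductSpace 𝕜 E'] [CompleteSpace E']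

theorem norm_sum_adjoint_comp_comp_le {ι : Type*} [Fintype ι] (S : ι → E' →L[𝕜] G)
    (B : F →L[𝕜] G) (T : ι → E →L[𝕜] F) {α β : ℝ} (hα : 0 ≤ α) (hβ : 0 ≤ β)
    (hS : ∀ v, ∑ k, ‖S k v‖ ^ 2 ≤ (α * ‖v‖) ^ 2) (hT : ∀ u, ∑ k, ‖T k u‖ ^ 2 ≤ (β * ‖u‖) ^ 2) :
    ‖∑ k, adjoint (S k) ∘L B ∘L T k‖ ≤ α * ‖B‖ * β := by
  have sqrt_le_of_sq_le {γ : ℝ} (hγ : 0 ≤ γ) {r x : ℝ} (hr : r ≤ (γ * x) ^ 2) (hx : x = 1) :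
      √r ≤ γ := by
    simpa [hx, Real.sqrt_sq hγ] using Real.sqrt_le_sqrt hr
  refine opNorm_le_of_re_inner_le (by positivity) fun u v hu hv => ?_
  calc RCLike.re ⟪(∑ k, adjoint (S k) ∘L B ∘L T k) u, v⟫_𝕜
      ≤ ‖⟪(∑ k, adjoint (S k) ∘L B ∘L T k) u, v⟫_𝕜‖ := RCLike.re_le_norm _
    _ = ‖∑ k, ⟪B (T k u), S k v⟫_𝕜‖ := by simp [sum_inner, adjoint_inner_left]
    _ ≤ ∑ k, ‖B‖ * (‖T k u‖ * ‖S k v‖) := by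
        refine (norm_sum_le _ _).trans (sum_le_sum fun k _ => ?_)
        refine (norm_inner_le_norm _ _).trans ?_
        rw [← mul_assoc]
        gcongr
        exact B.le_opNorm _
    _ ≤ ‖B‖ * (√(∑ k, ‖T k u‖ ^ 2) * √(∑ k, ‖S k v‖ ^ 2)) := by
        rw [← mul_sum]
        gcongr
        exact Real.sum_mul_le_sqrt_mul_sqrt _ _ _
    _ ≤ ‖B‖ * (β * α) := by
        gcongr
        exacts [sqrt_le_of_sq_le hβ (hT u) hu, sqrt_le_of_sq_le hα (hS v) hv]
    _ = α * ‖B‖ * β := by ring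

end ContinuousLinearMap

namespace Matrix

variable {ι κ : Type*} [Fintype ι] [DecidableEq ι] [Fintype κ]

theorem hadamard_of_inner_eq_sum_diagonal (c a : ι → EuclideanSpace 𝕜 κ) (B : Matrix ι ι 𝕜) :
    hadamard (of fun i j => ⟪c i, a j⟫_𝕜) B =
      ∑ k, (diagonal fun i => c i k)ᴴ * B * diagonal fun j => a j k := by
  ext i j
  simp [PiLp.inner_apply, sum_apply, mul_sum, mul_comm, mul_left_comm]

theorem sum_norm_sq_toEuclideanCLM_diagonal (a : ι → EuclideanSpace 𝕜 κ)
    (u : EuclideanSpace 𝕜 ι) :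
    ∑ k, ‖toEuclideanCLM (𝕜 := 𝕜) (diagonal fun j => a j k) u‖ ^ 2 =
      ∑ j, ‖a j‖ ^ 2 * ‖u j‖ ^ 2 := by
  simp only [EuclideanSpace.norm_sq_eq, ofLp_toEuclideanCLM, mulVec_diagonal, norm_mul, mul_pow,
    sum_mul]
  exact sum_comm

theorem sum_norm_sq_toEuclideanCLM_diagonal_le (a : ι → EuclideanSpace 𝕜 κ) {β : ℝ}
    (ha : ∀ j, ‖a j‖ ≤ β) (u : EuclideanSpace 𝕜 ι) :
    ∑ k, ‖toEuclideanCLM (𝕜 := 𝕜) (diagonal fun j => a j k) u‖ ^ 2 ≤ (β * ‖u‖) ^ 2 := by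
  rw [sum_norm_sq_toEuclideanCLM_diagonal, mul_pow, EuclideanSpace.norm_sq_eq, mul_sum]
  gcongr with j
  exact ha j

theorem norm_toEuclideanCLM_hadamard_of_inner_le (c a : ι → EuclideanSpace 𝕜 κ)
    (B : Matrix ι ι 𝕜) {α β : ℝ} (hα : 0 ≤ α) (hc : ∀ i, ‖c i‖ ≤ α) (hβ : 0 ≤ β)
    (ha : ∀ j, ‖a j‖ ≤ β) :
    ‖toEuclideanCLM (𝕜 := 𝕜) (hadamard (of fun i j => ⟪c i, a j⟫_𝕜) B)‖ ≤
      α * β * ‖toEuclideanCLM (𝕜 := 𝕜) B‖ := by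
  rw [hadamard_of_inner_eq_sum_diagonal, map_sum]
  simp only [map_mul, ← star_eq_conjTranspose, map_star, ContinuousLinearMap.star_eq_adjoint,
    ContinuousLinearMap.mul_def, ContinuousLinearMap.comp_assoc]
  calc _ ≤ α * ‖toEuclideanCLM (𝕜 := 𝕜) B‖ * β :=
        ContinuousLinearMap.norm_sum_adjoint_comp_comp_le _ _ _ hα hβ
          (sum_norm_sq_toEuclideanCLM_diagonal_le c hc)
          (sum_norm_sq_toEuclideanCLM_diagonal_le a ha)
    _ = α * β * ‖toEuclideanCLM (𝕜 := 𝕜) B‖ := by ring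

end Matrix

end

/-- Schur multiplier bound: if `A i j = ⟪y i, x j⟫` is a Gram-type matrix of
vectors in a complex Hilbert space, then for any matrix `B` the Hadamard
(entrywise) product satisfies
`‖A ⊙ B‖ ≤ (sup_i ‖y i‖) (sup_j ‖x j‖) ‖B‖` for the `ℓ²`-operator norm. -/
theorem schur_multiplier_bound (n : ℕ)
    {H : Type*} [NormedAddCommGroup H] [InnerProductSpace ℂ H]
    (x y : Fin n → H) (A : Matrix (Fin n) (Fin n) ℂ)
    (hA : ∀ i j, A i j = (inner ℂ (y i) (x j) : ℂ))
    (B : Matrix (Fin n) (Fin n) ℂ) :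
    ‖Matrix.toEuclideanCLM (𝕜 := ℂ) (Matrix.hadamard A B)‖ ≤
      (⨆ i, ‖y i‖) * (⨆ j, ‖x j‖) * ‖Matrix.toEuclideanCLM (𝕜 := ℂ) B‖ := by
  obtain ⟨m, w, hw_inner, hw_norm⟩ :=
    exists_euclideanSpace_inner_eq_of_finite (𝕜 := ℂ) (Sum.elim y x)
  have hA_eq : A = of fun i j => ⟪w (.inl i), w (.inr j)⟫_ℂ := by
    ext i j
    simp [hA, hw_inner]
  have le_iSup_norm (z : Fin n → H) (i : Fin n) : ‖z i‖ ≤ ⨆ i, ‖z i‖ :=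
    le_ciSup (f := fun i => ‖z i‖) (Set.finite_range _).bddAbove i
  rw [hA_eq]
  exact norm_toEuclideanCLM_hadamard_of_inner_le _ _ B
    (Real.iSup_nonneg fun i => norm_nonneg (y i))
    (fun i => by simpa [hw_norm] using le_iSup_norm y i)
    (Real.iSup_nonneg fun j => norm_nonneg (x j))
    (fun j => by simpa [hw_norm] using le_iSup_norm x j)
end

section
/- Let G be a second countable locally compact Hausdorff topological group with left Haar measure λ, and let φ : G → ℂ be bounded and continuous. Then φ is positive definite (finite-sum sense) if and only if for every continuous compactly supported f : G → ℂ, the iterated integral ∫ G, ∫ G, φ (y⁻¹ * x) * f y * conj (f x) dλ(x) dλ(y) has zero imaginary part and nonnegative real part. (This is the abstract characterization (1) of continuous positive definite functions by integration against C_c(G) test functions.) -/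
open MeasureTheory

/-- A function `φ : G → ℂ` is positive definite if all the finite sums
`∑ i j, conj (c i) * c j * φ ((x i)⁻¹ * (x j))` are real and nonnegative. -/
def IsPositiveDefinite {G : Type*} [Group G] (φ : G → ℂ) : Prop :=
  ∀ (n : ℕ) (x : Fin n → G) (c : Fin n → ℂ),
    (∑ i, ∑ j, (starRingEnd ℂ) (c i) * c j * φ ((x i)⁻¹ * (x j))).im = 0 ∧
    0 ≤ (∑ i, ∑ j, (starRingEnd ℂ) (c i) * c j * φ ((x i)⁻¹ * (x j))).re

/-!
If `g` and `h` are supported in translates `a • V` and `b • V` of a small neighbourhood `V`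
of `1`, then `φ (y⁻¹ * x)` stays `ε`-close to `φ (a⁻¹ * b)` on the support of the integrand
(two-sided uniform continuity of `φ` on a compact set), so
`∬ φ (y⁻¹ * x) g y conj (h x)` is close to `φ (a⁻¹ * b) (∫ g) conj (∫ h)`. Splitting
`f ∈ C_c(G)` by a partition of unity subordinate to a cover of its support by translates
`p i • V` makes its integral `ε`-close to a positive-definiteness sum at the points `p i`.
Conversely, the sum at points `x i` with coefficients `c i` is `ε`-close to the integral of
`f = ∑ conj (c i) u i`, where `u i ≥ 0` has integral `1` and support in `x i • V`. In both
directions nonnegativity passes to the limit because `{z : ℂ | 0 ≤ z}` is closed.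
-/

open Set Function Filter Topology Pointwise ComplexConjugate ComplexOrder

theorem Complex.nonneg_iff_im_eq_zero_and_re_nonneg {z : ℂ} : 0 ≤ z ↔ z.im = 0 ∧ 0 ≤ z.re := by
  rw [Complex.nonneg_iff, eq_comm, and_comm]

theorem Complex.nonneg_of_forall_exists_nonneg_norm_sub_le {z : ℂ} (M : ℝ)
    (h : ∀ ε > 0, ∃ w : ℂ, 0 ≤ w ∧ ‖z - w‖ ≤ ε * M) : 0 ≤ z := by
  have hz : z ∈ closure (Ici 0) := Metric.mem_closure_iff.2 fun δ hδ => by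
    obtain ⟨w, hw, hzw⟩ := h (δ / (|M| + 1)) (by positivity)
    refine ⟨w, hw, ?_⟩
    rw [dist_eq_norm]
    calc ‖z - w‖ ≤ δ / (|M| + 1) * |M| := hzw.trans (by gcongr; exact le_abs_self M)
      _ < δ := by
        rw [div_mul_eq_mul_div, div_lt_iff₀ (by positivity)]
        nlinarith
  exact isClosed_Ici.closure_subset hz

theorem norm_sum_sum_sub_sum_sum_le {ι E : Type*} [Fintype ι] [SeminormedAddCommGroup E]
    (A B : ι → ι → E) (m : ι → ℝ) {ε : ℝ} (h : ∀ i j, ‖A i j - B i j‖ ≤ ε * m i * m j) :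
    ‖∑ i, ∑ j, A i j - ∑ i, ∑ j, B i j‖ ≤ ε * (∑ i, m i) ^ 2 :=
  calc ‖∑ i, ∑ j, A i j - ∑ i, ∑ j, B i j‖ = ‖∑ i, ∑ j, (A i j - B i j)‖ := by
        simp only [Finset.sum_sub_distrib]
    _ ≤ ∑ i, ∑ j, ‖A i j - B i j‖ :=
        (norm_sum_le _ _).trans (Finset.sum_le_sum fun i _ => norm_sum_le _ _)
    _ ≤ ∑ i, ∑ j, ε * m i * m j := by gcongr with i _ j _; exact h i j
    _ = ε * (∑ i, m i) ^ 2 := by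
        rw [sq, Finset.sum_mul_sum, Finset.mul_sum]
        simp only [Finset.mul_sum, mul_assoc]

theorem HasCompactSupport.finsetSum {ι X M : Type*} [TopologicalSpace X] [AddCommMonoid M]
    (s : Finset ι) {f : ι → X → M} (hf : ∀ i ∈ s, HasCompactSupport (f i)) :
    HasCompactSupport (∑ i ∈ s, f i) := by
  induction s using Finset.cons_induction with
  | empty => simpa using HasCompactSupport.zero
  | cons i s hi ih =>
    rw [Finset.sum_cons]
    exact (hf i (Finset.mem_cons_self i s)).add
      (ih fun j hj => hf j (Finset.mem_cons_of_mem hj))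

theorem IsCompact.exists_mem_nhds_one_dist_mul_mul_lt {G X : Type*} [Group G]
    [TopologicalSpace G] [IsTopologicalGroup G] [PseudoMetricSpace X] {φ : G → X}
    (hφ : Continuous φ) {L : Set G} (hL : IsCompact L) {ε : ℝ} (hε : 0 < ε) :
    ∃ V ∈ 𝓝 (1 : G), ∀ g ∈ L, ∀ v ∈ V, ∀ w ∈ V, dist (φ (v⁻¹ * g * w)) (φ g) < ε := by
  have h : ∀ᶠ p : G × G in 𝓝 (1, 1), ∀ g ∈ L, dist (φ (p.1⁻¹ * g * p.2)) (φ g) < ε := by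
    refine hL.eventually_forall_of_forall_eventually fun g _ => ?_
    have hc : Continuous fun z : (G × G) × G => dist (φ (z.1.1⁻¹ * z.2 * z.1.2)) (φ z.2) := by
      fun_prop
    exact hc.continuousAt.eventually_lt continuousAt_const (by simpa using hε)
  obtain ⟨U, hU, W, hW, hUW⟩ := mem_nhds_prod_iff.1 h
  exact ⟨U ∩ W, inter_mem hU hW, fun g hg v hv w hw => hUW (mk_mem_prod hv.1 hw.2) g hg⟩

theorem IsCompact.exists_fin_cover_smul {G : Type*} [Group G] [TopologicalSpace G]
    [ContinuousMul G] {K U : Set G} (hK : IsCompact K) (hU : IsOpen U) (hU1 : (1 : G) ∈ U) :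
    ∃ (n : ℕ) (p : Fin n → G), (∀ i, p i ∈ K) ∧ K ⊆ ⋃ i, p i • U := by
  obtain ⟨t, htK, hKt⟩ :=
    hK.elim_nhds_subcover (fun a => a • U) fun a _ => (hU.smul a).mem_nhds ⟨1, hU1, mul_one a⟩
  refine ⟨t.card, fun i => t.equivFin.symm i, fun i => htK _ (t.equivFin.symm i).2, ?_⟩
  intro y hy
  obtain ⟨a, ha, hya⟩ := mem_iUnion₂.1 (hKt hy)
  exact mem_iUnion.2 ⟨t.equivFin ⟨a, ha⟩, by simpa using hya⟩

theorem HasCompactSupport.exists_sum_eq_support_subset_smul {G E : Type*} [Group G]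
    [TopologicalSpace G] [ContinuousMul G] [LocallyCompactSpace G] [T2Space G]
    [NormedAddCommGroup E] [NormedSpace ℝ E] {f : G → E} (hfs : HasCompactSupport f)
    (hf : Continuous f) {V : Set G} (hV : V ∈ 𝓝 1) :
    ∃ (n : ℕ) (p : Fin n → G) (g : Fin n → G → E), (∀ i, p i ∈ tsupport f) ∧
      (∀ i, Continuous (g i)) ∧ (∀ i, HasCompactSupport (g i)) ∧
      (∀ i, support (g i) ⊆ p i • V) ∧ ∑ i, g i = f ∧ ∀ y, ∑ i, ‖g i y‖ = ‖f y‖ := by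
  obtain ⟨n, p, hpK, hKp⟩ :=
    hfs.exists_fin_cover_smul isOpen_interior (mem_interior_iff_mem_nhds.2 hV)
  obtain ⟨ρ, hρp, hρ1, hρ01, -⟩ := exists_continuous_sum_one_of_isOpen_isCompact
    (fun i => isOpen_interior.smul (p i)) hfs hKp
  have hρf y : (∑ i, ρ i y) • f y = f y := by
    by_cases hy : y ∈ tsupport f
    · simpa using congrArg (· • f y) (hρ1 hy)
    · simp [image_eq_zero_of_notMem_tsupport hy]
  refine ⟨n, p, fun i y => ρ i y • f y, hpK, fun i => by fun_prop,
    fun i => hfs.smul_left (f := ρ i), fun i => ?_, ?_, fun y => ?_⟩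
  · exact (support_smul_subset_left _ _).trans <| (subset_tsupport _).trans <|
      (hρp i).trans (smul_set_mono interior_subset)
  · exact funext fun y => by simpa [Finset.sum_smul] using hρf y
  · conv_rhs => rw [← hρf y]
    rw [norm_smul, Real.norm_of_nonneg (Finset.sum_nonneg fun i _ => (hρ01 i y).1), Finset.sum_mul]
    simp [norm_smul, Real.norm_of_nonneg (hρ01 _ y).1]

theorem exists_continuous_nonneg_support_subset_integral_eq_one {X : Type*}
    [TopologicalSpace X] [T2Space X] [LocallyCompactSpace X] [MeasurableSpace X]
    [OpensMeasurableSpace X] (μ : Measure X) [μ.IsOpenPosMeasure] [IsFiniteMeasureOnCompacts μ]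
    {x : X} {V : Set X} (hV : V ∈ 𝓝 x) :
    ∃ u : X → ℝ, Continuous u ∧ HasCompactSupport u ∧ 0 ≤ u ∧ support u ⊆ V ∧
      ∫ y, u y ∂μ = 1 := by
  obtain ⟨u, hu1, hu0, hus, hu01⟩ := exists_continuous_one_zero_of_isCompact isCompact_singleton
    isOpen_interior.isClosed_compl (disjoint_compl_right_iff_subset.2
      (singleton_subset_iff.2 (mem_interior_iff_mem_nhds.2 hV)))
  have hpos : 0 < ∫ y, u y ∂μ := u.continuous.integral_pos_of_hasCompactSupport_nonneg_nonzero hus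
    (fun y => (hu01 y).1) (x := x) (by simp [hu1 (mem_singleton x)])
  refine ⟨fun y => (∫ y, u y ∂μ)⁻¹ * u y, by fun_prop, hus.mul_left, fun y => ?_, ?_, ?_⟩
  · exact mul_nonneg (inv_nonneg.2 hpos.le) (hu01 y).1
  · intro y hy
    by_contra hyV
    exact hy (by simp [hu0 (fun h => hyV (interior_subset h))])
  · rw [integral_const_mul, inv_mul_cancel₀ hpos.ne']

/-- Taken over the product measure rather than iteratively, so that additivity in each argument
only needs integrability of the integrand on `G × G`. -/
noncomputable def kernelPairing {G : Type*} [Group G] [MeasurableSpace G] (φ : G → ℂ)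
    (μ : Measure G) (g h : G → ℂ) : ℂ :=
  ∫ p : G × G, φ (p.1⁻¹ * p.2) * g p.1 * conj (h p.2) ∂μ.prod μ

section KernelPairing

variable {G : Type*} [Group G] [TopologicalSpace G] [IsTopologicalGroup G]
  [SecondCountableTopology G] [MeasurableSpace G] [BorelSpace G]
  {μ : Measure G} [IsFiniteMeasureOnCompacts μ] {φ g h : G → ℂ}

theorem integrable_kernelPairing_integrand (hφ : Continuous φ) (hg : Continuous g)
    (hgs : HasCompactSupport g) (hh : Continuous h) (hhs : HasCompactSupport h) :
    Integrable (fun p : G × G => φ (p.1⁻¹ * p.2) * g p.1 * conj (h p.2)) (μ.prod μ) := by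
  refine Continuous.integrable_of_hasCompactSupport (by fun_prop) ?_
  refine HasCompactSupport.intro (hgs.prod hhs) fun p hp => ?_
  rcases not_and_or.1 hp with hp | hp <;> simp [image_eq_zero_of_notMem_tsupport hp]

theorem integral_integral_eq_kernelPairing [SFinite μ] (hφ : Continuous φ) (hg : Continuous g)
    (hgs : HasCompactSupport g) (hh : Continuous h) (hhs : HasCompactSupport h) :
    ∫ y, ∫ x, φ (y⁻¹ * x) * g y * conj (h x) ∂μ ∂μ = kernelPairing φ μ g h :=
  (integral_prod _ (integrable_kernelPairing_integrand hφ hg hgs hh hhs)).symm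

theorem kernelPairing_sum_sum [SFinite μ] {ι κ : Type*} [Fintype ι] [Fintype κ] {g : ι → G → ℂ}
    {h : κ → G → ℂ} (hφ : Continuous φ) (hg : ∀ i, Continuous (g i))
    (hgs : ∀ i, HasCompactSupport (g i)) (hh : ∀ j, Continuous (h j))
    (hhs : ∀ j, HasCompactSupport (h j)) :
    kernelPairing φ μ (∑ i, g i) (∑ j, h j) = ∑ i, ∑ j, kernelPairing φ μ (g i) (h j) := by
  have hint i j := integrable_kernelPairing_integrand (μ := μ) hφ (hg i) (hgs i) (hh j) (hhs j)
  simp only [kernelPairing, Finset.sum_apply, map_sum, Finset.mul_sum, Finset.sum_mul]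
  rw [integral_finsetSum _ fun j _ => integrable_finsetSum _ fun i _ => hint i j]
  exact (Finset.sum_congr rfl fun j _ => integral_finsetSum _ fun i _ => hint i j).trans
    Finset.sum_comm

theorem norm_kernelPairing_sub_le [SFinite μ] (hφ : Continuous φ) (hg : Continuous g)
    (hgs : HasCompactSupport g) (hh : Continuous h) (hhs : HasCompactSupport h) {c : ℂ} {ε : ℝ}
    (hc : ∀ y ∈ support g, ∀ x ∈ support h, ‖φ (y⁻¹ * x) - c‖ ≤ ε) :
    ‖kernelPairing φ μ g h - (∫ y, g y ∂μ) * conj (∫ x, h x ∂μ) * c‖ ≤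
      ε * (∫ y, ‖g y‖ ∂μ) * ∫ x, ‖h x‖ ∂μ := by
  have hgi := hg.integrable_of_hasCompactSupport (μ := μ) hgs
  have hhi := hh.integrable_of_hasCompactSupport (μ := μ) hhs
  have hconst_int : Integrable (fun p : G × G => c * g p.1 * conj (h p.2)) (μ.prod μ) :=
    integrable_kernelPairing_integrand (φ := fun _ => c) continuous_const hg hgs hh hhs
  have hconst : (∫ y, g y ∂μ) * conj (∫ x, h x ∂μ) * c =
      ∫ p : G × G, c * g p.1 * conj (h p.2) ∂μ.prod μ := by
    rw [integral_prod_mul (fun y => c * g y) fun x => conj (h x), integral_const_mul,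
      integral_conj, mul_comm, mul_assoc]
  have hbound : ε * (∫ y, ‖g y‖ ∂μ) * ∫ x, ‖h x‖ ∂μ =
      ∫ p : G × G, ε * ‖g p.1‖ * ‖h p.2‖ ∂μ.prod μ := by
    rw [integral_prod_mul (fun y => ε * ‖g y‖) fun x => ‖h x‖, integral_const_mul]
  rw [hconst, hbound, kernelPairing,
    ← integral_sub (integrable_kernelPairing_integrand hφ hg hgs hh hhs) hconst_int]
  refine norm_integral_le_of_norm_le ((hgi.norm.const_mul ε).mul_prod hhi.norm)
    (Eventually.of_forall fun p => ?_)
  rw [← sub_mul, ← sub_mul, norm_mul, norm_mul, RCLike.norm_conj]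
  by_cases hy : g p.1 = 0
  · simp [hy]
  by_cases hx : h p.2 = 0
  · simp [hx]
  gcongr
  exact hc _ hy _ hx

theorem norm_kernelPairing_sum_sub_sum_le [SFinite μ] {n : ℕ} {g : Fin n → G → ℂ}
    (hφ : Continuous φ) (hg : ∀ i, Continuous (g i)) (hgs : ∀ i, HasCompactSupport (g i))
    {p : Fin n → G}
    {V : Set G} {ε : ℝ} (hsupp : ∀ i, support (g i) ⊆ p i • V)
    (hV : ∀ i j, ∀ v ∈ V, ∀ w ∈ V, dist (φ (v⁻¹ * ((p i)⁻¹ * p j) * w)) (φ ((p i)⁻¹ * p j)) ≤ ε) :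
    ‖kernelPairing φ μ (∑ i, g i) (∑ i, g i) -
        ∑ i, ∑ j, (∫ y, g i y ∂μ) * conj (∫ x, g j x ∂μ) * φ ((p i)⁻¹ * p j)‖ ≤
      ε * (∑ i, ∫ y, ‖g i y‖ ∂μ) ^ 2 := by
  rw [kernelPairing_sum_sum hφ hg hgs hg hgs]
  refine norm_sum_sum_sub_sum_sum_le _ _ _ fun i j =>
    norm_kernelPairing_sub_le hφ (hg i) (hgs i) (hg j) (hgs j) fun y hy x hx => ?_
  have hy' := mem_smul_set_iff_inv_smul_mem.1 (hsupp i hy)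
  have hx' := mem_smul_set_iff_inv_smul_mem.1 (hsupp j hx)
  have hyx : y⁻¹ * x = ((p i)⁻¹ * y)⁻¹ * ((p i)⁻¹ * p j) * ((p j)⁻¹ * x) := by group
  rw [hyx, ← Complex.dist_eq]
  exact hV i j _ hy' _ hx'

end KernelPairing

theorem isPositiveDefinite_iff_forall_nonneg {G : Type*} [Group G] {φ : G → ℂ} :
    IsPositiveDefinite φ ↔ ∀ (n : ℕ) (x : Fin n → G) (c : Fin n → ℂ),
      0 ≤ ∑ i, ∑ j, conj (c i) * c j * φ ((x i)⁻¹ * x j) := by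
  simp only [IsPositiveDefinite, Complex.nonneg_iff_im_eq_zero_and_re_nonneg]

section PositiveDefinite

variable {G : Type*} [Group G] [TopologicalSpace G] [IsTopologicalGroup G]
  [LocallyCompactSpace G] [T2Space G] [SecondCountableTopology G] [MeasurableSpace G]
  [BorelSpace G] {μ : Measure G} [IsFiniteMeasureOnCompacts μ] [SFinite μ] {φ : G → ℂ}

theorem IsPositiveDefinite.kernelPairing_self_nonneg (hPD : IsPositiveDefinite φ)
    (hφ : Continuous φ) {f : G → ℂ} (hf : Continuous f) (hfs : HasCompactSupport f) :
    0 ≤ kernelPairing φ μ f f := by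
  refine Complex.nonneg_of_forall_exists_nonneg_norm_sub_le ((∫ y, ‖f y‖ ∂μ) ^ 2) fun ε hε => ?_
  obtain ⟨V, hV1, hV⟩ := (hfs.inv.mul hfs).exists_mem_nhds_one_dist_mul_mul_lt hφ hε
  obtain ⟨n, p, g, hpK, hg, hgs, hsupp, hsum, hnorm⟩ := hfs.exists_sum_eq_support_subset_smul hf hV1
  have hnorm_int : ∑ i, ∫ y, ‖g i y‖ ∂μ = ∫ y, ‖f y‖ ∂μ := by
    rw [← integral_finsetSum _ fun i _ => ((hg i).integrable_of_hasCompactSupport (hgs i)).norm]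
    simp only [hnorm]
  refine ⟨_, isPositiveDefinite_iff_forall_nonneg.1 hPD n p fun i => conj (∫ y, g i y ∂μ), ?_⟩
  simpa only [Complex.conj_conj, hsum, hnorm_int] using
    norm_kernelPairing_sum_sub_sum_le (μ := μ) hφ hg hgs hsupp fun i j v hv w hw =>
      (hV _ (mul_mem_mul (inv_mem_inv.2 (hpK i)) (hpK j)) v hv w hw).le

theorem isPositiveDefinite_of_forall_kernelPairing_self_nonneg [μ.IsOpenPosMeasure]
    (hφ : Continuous φ)
    (h : ∀ f : G → ℂ, Continuous f → HasCompactSupport f → 0 ≤ kernelPairing φ μ f f) :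
    IsPositiveDefinite φ := by
  refine isPositiveDefinite_iff_forall_nonneg.2 fun n x c => ?_
  refine Complex.nonneg_of_forall_exists_nonneg_norm_sub_le ((∑ i, ‖c i‖) ^ 2) fun ε hε => ?_
  obtain ⟨V, hV1, hV⟩ := (finite_range fun q : Fin n × Fin n => (x q.1)⁻¹ * x q.2).isCompact
    |>.exists_mem_nhds_one_dist_mul_mul_lt hφ hε
  have hxV i : x i • V ∈ 𝓝 (x i) := by simpa using (smul_mem_nhds_smul_iff (x i)).2 hV1
  choose u hu hus hu0 husupp hu1 using fun i =>
    exists_continuous_nonneg_support_subset_integral_eq_one μ (hxV i)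
  set g : Fin n → G → ℂ := fun i y => conj (c i) * u i y
  have hg i : Continuous (g i) := by fun_prop
  have hgs i : HasCompactSupport (g i) := ((hus i).comp_left Complex.ofReal_zero).mul_left
  have hint i : ∫ y, g i y ∂μ = conj (c i) := by
    simp [g, integral_const_mul, integral_complex_ofReal, hu1]
  have hnorm i : ∫ y, ‖g i y‖ ∂μ = ‖c i‖ := by
    simp [g, Real.norm_of_nonneg (hu0 i _), integral_const_mul, hu1]
  have hsupp i : support (g i) ⊆ x i • V :=
    (support_mul_subset_right _ _).trans (by simpa using husupp i)
  refine ⟨_, h (∑ i, g i) (Finset.sum_fn _ g ▸ continuous_finsetSum _ fun i _ => hg i)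
    (.finsetSum _ fun i _ => hgs i), ?_⟩
  rw [norm_sub_rev]
  simpa only [hint, hnorm, Complex.conj_conj] using
    norm_kernelPairing_sum_sub_sum_le (μ := μ) hφ hg hgs hsupp fun i j v hv w hw =>
      (hV _ ⟨(i, j), rfl⟩ v hv w hw).le

end PositiveDefinite

theorem isPositiveDefinite_iff_integral_general
    {G : Type*} [Group G] [TopologicalSpace G] [IsTopologicalGroup G]
    [LocallyCompactSpace G] [T2Space G] [SecondCountableTopology G]
    [MeasurableSpace G] [BorelSpace G]
    (lam : Measure G) [lam.IsHaarMeasure]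
    (φ : G → ℂ) (hcont : Continuous φ) :
    IsPositiveDefinite φ ↔
      ∀ f : G → ℂ, Continuous f → HasCompactSupport f →
        (∫ y : G, ∫ x : G,
            φ (y⁻¹ * x) * f y * (starRingEnd ℂ) (f x) ∂lam ∂lam).im = 0 ∧
        0 ≤ (∫ y : G, ∫ x : G,
            φ (y⁻¹ * x) * f y * (starRingEnd ℂ) (f x) ∂lam ∂lam).re := by
  have hpair f (hf : Continuous f) (hfs : HasCompactSupport f) :
      ∫ y, ∫ x, φ (y⁻¹ * x) * f y * conj (f x) ∂lam ∂lam = kernelPairing φ lam f f :=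
    integral_integral_eq_kernelPairing hcont hf hfs hf hfs
  simp only [← Complex.nonneg_iff_im_eq_zero_and_re_nonneg]
  refine ⟨fun hPD f hf hfs => ?_, fun h => ?_⟩
  · rw [hpair f hf hfs]
    exact hPD.kernelPairing_self_nonneg hcont hf hfs
  · exact isPositiveDefinite_of_forall_kernelPairing_self_nonneg hcont fun f hf hfs =>
      hpair f hf hfs ▸ h f hf hfs

/-- A bounded continuous function on a second countable locally compact group
is positive definite (in the finite-sum sense) if and only if it satisfies the
integrated positivity condition
`∬ φ (y⁻¹ x) f y conj (f x) dλ(x) dλ(y) ≥ 0` for every `f ∈ C_c(G)`. -/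
theorem isPositiveDefinite_iff_integral
    {G : Type*} [Group G] [TopologicalSpace G] [IsTopologicalGroup G]
    [LocallyCompactSpace G] [T2Space G] [SecondCountableTopology G]
    [MeasurableSpace G] [BorelSpace G]
    (lam : Measure G) [lam.IsHaarMeasure]
    (φ : G → ℂ) (hbd : ∃ C : ℝ, ∀ x : G, ‖φ x‖ ≤ C) (hcont : Continuous φ) :
    IsPositiveDefinite φ ↔
      ∀ f : G → ℂ, Continuous f → HasCompactSupport f →
        (∫ y : G, ∫ x : G,
            φ (y⁻¹ * x) * f y * (starRingEnd ℂ) (f x) ∂lam ∂lam).im = 0 ∧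
        0 ≤ (∫ y : G, ∫ x : G,
            φ (y⁻¹ * x) * f y * (starRingEnd ℂ) (f x) ∂lam ∂lam).re :=
  isPositiveDefinite_iff_integral_general lam φ hcont
end
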